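/- arXiv:0911.1393 — 2 statements merged into one kernel-verified Lean document; each statement's English description precedes it below -/
import Mathlib

section
/- Let G be a simple graph on n ≥ 1 vertices with adjacency matrix A_G and clique number ω = ω(G), let J be the n×n all-ones matrix, and for a positive integer ℓ set Q_ℓ := A_G + (1/ℓ)J. Then max_{x ∈ Δ_n} x^T Q_ℓ x = 1 + (ω − ℓ)/(ℓω). Consequently, this maximum equals 1 if ℓ = ω, is strictly greater than 1 if ℓ < ω, and is strictly less than 1 if ℓ > ω. -/
/-! On the standard simplex `xᵀ J x = 1`, so `xᵀ Q_ℓ x = xᵀ A_G x + 1/ℓ` and the claim reduces to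
the Motzkin–Straus theorem `max xᵀ A_G x = 1 - 1/ω`. The uniform distribution on a maximum clique
attains `1 - 1/ω`. Conversely, if two vertices `i, j` in the support of `x` are non-adjacent, the
form is affine along `e_i - e_j`, so moving all the mass of one of them onto the other does not
decrease it and shrinks the support. Once the support is a clique, `xᵀ A_G x = 1 - ∑ xᵢ²`, and by
Cauchy–Schwarz `∑ xᵢ² ≥ 1 / |supp x| ≥ 1/ω`. -/

open Matrix Finset

theorem Matrix.dotProduct_of_one_mulVec {ι R : Type*} [Fintype ι] [CommSemiring R]
    (x : ι → R) :
    x ⬝ᵥ of (fun _ _ => (1 : R)) *ᵥ x = (∑ i, x i) ^ 2 := by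
  rw [sq, Finset.sum_mul_sum]
  simp [dotProduct, mulVec, Finset.mul_sum]

namespace SimpleGraph

theorem cliqueNum_pos {V : Type*} [Fintype V] [Nonempty V] (G : SimpleGraph V) :
    0 < G.cliqueNum := by
  obtain ⟨v⟩ := ‹Nonempty V›
  have hv : G.IsClique (({v} : Finset V) : Set V) := by
    rw [coe_singleton]; exact isClique_singleton v
  exact (by simpa using hv.card_le_cliqueNum : 1 ≤ G.cliqueNum)

variable {V : Type*} [Fintype V] [DecidableEq V] (G : SimpleGraph V) [DecidableRel G.Adj]

theorem dotProduct_adjMatrix_top_mulVec (x : V → ℝ) :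
    x ⬝ᵥ (⊤ : SimpleGraph V).adjMatrix ℝ *ᵥ x = (∑ i, x i) ^ 2 - ∑ i, x i ^ 2 := by
  have : (⊤ : SimpleGraph V).adjMatrix ℝ = of (fun _ _ => 1) - 1 := by
    ext i j; by_cases h : i = j <;> simp [h, one_apply]
  rw [this, sub_mulVec, dotProduct_sub, dotProduct_of_one_mulVec, one_mulVec]
  simp [dotProduct, sq]

variable {G}

theorem dotProduct_adjMatrix_mulVec_eq_top {x : V → ℝ} (hx : G.IsClique (Function.support x)) :
    x ⬝ᵥ G.adjMatrix ℝ *ᵥ x = x ⬝ᵥ (⊤ : SimpleGraph V).adjMatrix ℝ *ᵥ x := by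
  simp only [dotProduct, mulVec, Finset.mul_sum]
  refine Finset.sum_congr rfl fun i _ => Finset.sum_congr rfl fun j _ => ?_
  by_cases hi : x i = 0
  · simp [hi]
  by_cases hj : x j = 0
  · simp [hj]
  by_cases hij : i = j
  · simp [hij]
  · simp [hij, hx hi hj hij]

theorem dotProduct_adjMatrix_mulVec_le_of_isClique {x : V → ℝ} (hx : x ∈ stdSimplex ℝ V)
    (hc : G.IsClique (Function.support x)) :
    x ⬝ᵥ G.adjMatrix ℝ *ᵥ x ≤ 1 - (G.cliqueNum : ℝ)⁻¹ := by
  set s := univ.filter fun i => x i ≠ 0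
  have hsum : ∑ i ∈ s, x i = 1 := (sum_filter_ne_zero _).trans hx.2
  have hsum_sq : ∑ i ∈ s, x i ^ 2 = ∑ i, x i ^ 2 :=
    sum_filter_of_ne fun i _ h => by simpa using h
  have hs : 0 < #s := card_pos.2 (nonempty_of_sum_ne_zero (hsum ▸ one_ne_zero))
  have hω : #s ≤ G.cliqueNum :=
    IsClique.card_le_cliqueNum (tc := hc.subset fun i hi => by simpa [s] using hi)
  have hsq : 1 ≤ #s * ∑ i, x i ^ 2 := by
    simpa [hsum, hsum_sq] using sq_sum_le_card_mul_sum_sq (s := s) (f := x)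
  have hinv : (G.cliqueNum : ℝ)⁻¹ ≤ (#s : ℝ)⁻¹ :=
    inv_anti₀ (by exact_mod_cast hs) (by exact_mod_cast hω)
  have : (#s : ℝ)⁻¹ ≤ ∑ i, x i ^ 2 :=
    (inv_le_iff_one_le_mul₀' (by exact_mod_cast hs)).2 hsq
  rw [dotProduct_adjMatrix_mulVec_eq_top hc, dotProduct_adjMatrix_top_mulVec, hx.2]
  linarith

theorem dotProduct_adjMatrix_mulVec_add_smul {i j : V} (hij : ¬ G.Adj i j) (x : V → ℝ)
    (t : ℝ) :
    (x + t • (Pi.single i 1 - Pi.single j 1)) ⬝ᵥ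
        G.adjMatrix ℝ *ᵥ (x + t • (Pi.single i 1 - Pi.single j 1)) =
      x ⬝ᵥ G.adjMatrix ℝ *ᵥ x + 2 * t * ((G.adjMatrix ℝ *ᵥ x) i - (G.adjMatrix ℝ *ᵥ x) j) := by
  set d : V → ℝ := Pi.single i 1 - Pi.single j 1
  have hd : ∀ y, d ⬝ᵥ G.adjMatrix ℝ *ᵥ y =
      (G.adjMatrix ℝ *ᵥ y) i - (G.adjMatrix ℝ *ᵥ y) j := fun y => by
    simp [d, sub_dotProduct]
  have hdd : d ⬝ᵥ G.adjMatrix ℝ *ᵥ d = 0 := by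
    rw [hd]; simp [d, hij, adj_comm]
  have hsymm : x ⬝ᵥ G.adjMatrix ℝ *ᵥ d = d ⬝ᵥ G.adjMatrix ℝ *ᵥ x := by
    rw [dotProduct_mulVec, ← mulVec_transpose, transpose_adjMatrix, dotProduct_comm]
  simp only [mulVec_add, mulVec_smul, add_dotProduct, dotProduct_add, smul_dotProduct,
    dotProduct_smul, hsymm, hdd, hd, smul_eq_mul]
  ring

theorem exists_support_ssubset_dotProduct_adjMatrix_mulVec_le {x : V → ℝ}
    (hx : x ∈ stdSimplex ℝ V) {i j : V} (hij : i ≠ j) (hadj : ¬ G.Adj i j) (hi : x i ≠ 0)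
    (hj : x j ≠ 0) :
    ∃ y ∈ stdSimplex ℝ V, Function.support y ⊂ Function.support x ∧
      x ⬝ᵥ G.adjMatrix ℝ *ᵥ x ≤ y ⬝ᵥ G.adjMatrix ℝ *ᵥ y := by
  wlog hle : (G.adjMatrix ℝ *ᵥ x) j ≤ (G.adjMatrix ℝ *ᵥ x) i generalizing i j
  · exact this hij.symm (fun h => hadj h.symm) hj hi (le_of_not_ge hle)
  set y := x + x j • (Pi.single i 1 - Pi.single j 1) with hy
  have hyi : y i = x i + x j := by simp [hy, hij]
  have hyj : y j = 0 := by simp [hy, hij.symm]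
  have hyk : ∀ k, k ≠ i → k ≠ j → y k = x k := fun k hki hkj => by simp [hy, hki, hkj]
  refine ⟨y, ⟨fun k => ?_, ?_⟩, ?_, ?_⟩
  · rcases eq_or_ne k i with rfl | hki
    · rw [hyi]; exact add_nonneg (hx.1 k) (hx.1 j)
    rcases eq_or_ne k j with rfl | hkj
    · rw [hyj]
    · rw [hyk k hki hkj]; exact hx.1 k
  · simp [hy, sum_add_distrib, hx.2, ← mul_sum, sum_sub_distrib]
  · refine (Set.ssubset_iff_of_subset fun k hk => ?_).2 ⟨j, hj, by simp [hyj]⟩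
    rcases eq_or_ne k i with rfl | hki
    · exact hi
    rcases eq_or_ne k j with rfl | hkj
    · simp [hyj] at hk
    · rwa [Function.mem_support, ← hyk k hki hkj]
  · rw [hy, dotProduct_adjMatrix_mulVec_add_smul hadj]
    nlinarith [hx.1 j]

theorem dotProduct_adjMatrix_mulVec_le {x : V → ℝ} (hx : x ∈ stdSimplex ℝ V) :
    x ⬝ᵥ G.adjMatrix ℝ *ᵥ x ≤ 1 - (G.cliqueNum : ℝ)⁻¹ := by
  induction hN : (Function.support x).ncard using Nat.strong_induction_on
    generalizing x with
  | _ N ih =>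
    by_cases hc : G.IsClique (Function.support x)
    · exact dotProduct_adjMatrix_mulVec_le_of_isClique hx hc
    obtain ⟨i, hi, j, hj, hij, hadj⟩ : ∃ i, x i ≠ 0 ∧ ∃ j, x j ≠ 0 ∧ i ≠ j ∧ ¬ G.Adj i j := by
      simpa [IsClique, Set.Pairwise] using hc
    obtain ⟨y, hy, hsupp, hle⟩ :=
      exists_support_ssubset_dotProduct_adjMatrix_mulVec_le hx hij hadj hi hj
    exact hle.trans (ih _ (hN ▸ Set.ncard_lt_ncard hsupp (Set.toFinite _)) hy rfl)

variable (G)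

theorem exists_mem_stdSimplex_dotProduct_adjMatrix_mulVec_eq [Nonempty V] :
    ∃ x ∈ stdSimplex ℝ V, x ⬝ᵥ G.adjMatrix ℝ *ᵥ x = 1 - (G.cliqueNum : ℝ)⁻¹ := by
  obtain ⟨s, hs⟩ := G.exists_isNClique_cliqueNum
  have hω : (G.cliqueNum : ℝ) ≠ 0 := by exact_mod_cast G.cliqueNum_pos.ne'
  set x : V → ℝ := fun i => if i ∈ s then (G.cliqueNum : ℝ)⁻¹ else 0
  have hc : G.IsClique (Function.support x) :=
    hs.isClique.subset (Function.support_subset_iff'.2 fun i hi => if_neg hi)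
  have hsum : ∑ i, x i = 1 := by simp [x, hs.card_eq, hω]
  refine ⟨x, ⟨fun i => by positivity, hsum⟩, ?_⟩
  have hsum_sq : ∑ i, x i ^ 2 = (G.cliqueNum : ℝ)⁻¹ := by
    simp only [x, ite_pow, inv_pow, ne_eq, OfNat.ofNat_ne_zero, not_false_eq_true, zero_pow,
      sum_ite_mem, univ_inter, sum_const, hs.card_eq, nsmul_eq_mul]
    field_simp
  rw [dotProduct_adjMatrix_mulVec_eq_top hc, dotProduct_adjMatrix_top_mulVec, hsum, hsum_sq,
    one_pow]

theorem isGreatest_dotProduct_adjMatrix_mulVec [Nonempty V] :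
    IsGreatest ((fun x => x ⬝ᵥ G.adjMatrix ℝ *ᵥ x) '' stdSimplex ℝ V)
      (1 - (G.cliqueNum : ℝ)⁻¹) := by
  obtain ⟨x, hx, hxω⟩ := G.exists_mem_stdSimplex_dotProduct_adjMatrix_mulVec_eq
  exact ⟨⟨x, hx, hxω⟩, by rintro _ ⟨y, hy, rfl⟩; exact dotProduct_adjMatrix_mulVec_le hy⟩

end SimpleGraph

/-- With `Q_ℓ = A_G + (1/ℓ)J`, the maximum of `xᵀ Q_ℓ x` over the
standard simplex is `1 + (ω − ℓ)/(ℓω)`; consequently it equals 1 iff `ℓ = ω`, is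
`> 1` if `ℓ < ω` and `< 1` if `ℓ > ω`. -/
theorem stmt_5 (n : ℕ) (hn : 1 ≤ n) (G : SimpleGraph (Fin n)) [DecidableRel G.Adj]
    (ℓ : ℕ) (hℓ : 0 < ℓ) :
    IsGreatest
      {y : ℝ | ∃ x : Fin n → ℝ, (∀ i, 0 ≤ x i) ∧ (∑ i, x i) = 1 ∧
        y = x ⬝ᵥ (G.adjMatrix ℝ
              + (ℓ : ℝ)⁻¹ • Matrix.of (fun _ _ => (1 : ℝ))).mulVec x}
      (1 + ((G.cliqueNum : ℝ) - (ℓ : ℝ)) / ((ℓ : ℝ) * (G.cliqueNum : ℝ))) ∧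
    (ℓ = G.cliqueNum →
      1 + ((G.cliqueNum : ℝ) - (ℓ : ℝ)) / ((ℓ : ℝ) * (G.cliqueNum : ℝ)) = 1) ∧
    (ℓ < G.cliqueNum →
      1 < 1 + ((G.cliqueNum : ℝ) - (ℓ : ℝ)) / ((ℓ : ℝ) * (G.cliqueNum : ℝ))) ∧
    (G.cliqueNum < ℓ →
      1 + ((G.cliqueNum : ℝ) - (ℓ : ℝ)) / ((ℓ : ℝ) * (G.cliqueNum : ℝ)) < 1) := by
  have : Nonempty (Fin n) := Fin.pos_iff_nonempty.mp hn
  have hω : (0 : ℝ) < G.cliqueNum := by exact_mod_cast G.cliqueNum_pos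
  have hℓ' : (0 : ℝ) < ℓ := by exact_mod_cast hℓ
  have hvalue : 1 + ((G.cliqueNum : ℝ) - ℓ) / (ℓ * G.cliqueNum) =
      1 - (G.cliqueNum : ℝ)⁻¹ + (ℓ : ℝ)⁻¹ := by
    field_simp; ring
  have hQ : ∀ x ∈ stdSimplex ℝ (Fin n),
      x ⬝ᵥ (G.adjMatrix ℝ + (ℓ : ℝ)⁻¹ • of fun _ _ => 1) *ᵥ x =
        x ⬝ᵥ G.adjMatrix ℝ *ᵥ x + (ℓ : ℝ)⁻¹ := fun x hx => by
    rw [add_mulVec, dotProduct_add, smul_mulVec, dotProduct_smul, dotProduct_of_one_mulVec,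
      hx.2]
    simp
  obtain ⟨⟨x, hx, hxω⟩, hub⟩ := G.isGreatest_dotProduct_adjMatrix_mulVec
  refine ⟨⟨⟨x, hx.1, hx.2, by rw [hQ x hx, hvalue, ← hxω]⟩, ?_⟩, ?_, fun h => ?_,
    fun h => ?_⟩
  · rintro _ ⟨y, hy0, hy1, rfl⟩
    rw [hQ y ⟨hy0, hy1⟩, hvalue]
    linarith [hub ⟨y, ⟨hy0, hy1⟩, rfl⟩]
  · rintro rfl
    simp
  · have : (ℓ : ℝ) < G.cliqueNum := by exact_mod_cast h
    linarith [div_pos (sub_pos.2 this) (mul_pos hℓ' hω)]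
  · have : (G.cliqueNum : ℝ) < ℓ := by exact_mod_cast h
    linarith [div_neg_of_neg_of_pos (sub_neg.2 this) (mul_pos hℓ' hω)]
end

section
/- Let A_1,…,A_n be arbitrary real n×n matrices. Define the system S: v^T A_i w = 0 (i = 1,…,n), u^T B_j w = 0 (j = 1,…,n), u^T C_k v = 0 (k = 1,…,n), where B_1 = C_1 = E_{11} and B_i = C_i = E_{1i} − E_{i1} for i = 2,…,n; and define the system S′ identical to S except that B_1 and C_1 are replaced by zero matrices. Suppose S has no solution (u,v,w) with u, v, w all nonzero. If (u, v, w) with u, v, w all nonzero is a solution of S′, then v = c·u and w = d·u for some nonzero real numbers c, d, and consequently u is a nonzero real vector satisfying u^T A_i u = 0 for all i = 1,…,n. -/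
/-!
For `j ≠ 1` the equation `uᵀ (E_{1j} - E_{j1}) x = 0` reads `u₁ xⱼ = uⱼ x₁`, so `x` is a multiple
of `u` as soon as `u₁ ≠ 0`. And `u₁ ≠ 0` indeed: otherwise the two extra equations `u₁ w₁ = 0`,
`u₁ v₁ = 0` of `S` hold automatically and `(u, v, w)` would solve `S`. Writing `v = c u`, `w = d u`
gives `vᵀ Aᵢ w = c d · uᵀ Aᵢ u`. The paper's index `1` is `0 : Fin n` below.
-/

open Matrix

section SingleForms

variable {ι R : Type*} [Fintype ι] [DecidableEq ι]

theorem dotProduct_single_one_mulVec [CommSemiring R] (i j : ι) (u x : ι → R) :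
    u ⬝ᵥ single i j 1 *ᵥ x = u i * x j := by
  rw [single_mulVec_eq, dotProduct_smul, dotProduct_single_one, smul_eq_mul, one_mul, mul_comm]

theorem dotProduct_single_sub_single_mulVec [CommRing R] (i j : ι) (u x : ι → R) :
    u ⬝ᵥ (single i j 1 - single j i 1) *ᵥ x = u i * x j - u j * x i := by
  rw [sub_mulVec, dotProduct_sub, dotProduct_single_one_mulVec, dotProduct_single_one_mulVec]

end SingleForms

theorem eq_div_smul_of_mul_eq_mul {ι K : Type*} [Field K] {u x : ι → K} {i₀ : ι}
    (hu : u i₀ ≠ 0) (h : ∀ j, u i₀ * x j = u j * x i₀) : x = (x i₀ / u i₀) • u := by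
  funext j
  rw [Pi.smul_apply, smul_eq_mul, div_mul_eq_mul_div, eq_div_iff hu, mul_comm, h j, mul_comm]

theorem stmt_11_general (n : ℕ) [NeZero n] (A : Fin n → Matrix (Fin n) (Fin n) ℝ)
    (B B' : Fin n → Matrix (Fin n) (Fin n) ℝ)
    (hB0 : B 0 = Matrix.single 0 0 1)
    (hBi : ∀ i : Fin n, i ≠ 0 →
      B i = Matrix.single 0 i 1 - Matrix.single i 0 1)
    (hB'i : ∀ i : Fin n, i ≠ 0 → B' i = B i)
    (hS : ¬ ∃ u v w : Fin n → ℝ, u ≠ 0 ∧ v ≠ 0 ∧ w ≠ 0 ∧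
      (∀ i, v ⬝ᵥ (A i).mulVec w = 0) ∧
      (∀ j, u ⬝ᵥ (B j).mulVec w = 0) ∧
      (∀ k, u ⬝ᵥ (B k).mulVec v = 0))
    (u v w : Fin n → ℝ) (hu : u ≠ 0) (hv : v ≠ 0) (hw : w ≠ 0)
    (h1 : ∀ i, v ⬝ᵥ (A i).mulVec w = 0)
    (h2 : ∀ j, u ⬝ᵥ (B' j).mulVec w = 0)
    (h3 : ∀ k, u ⬝ᵥ (B' k).mulVec v = 0) :
    (∃ c d : ℝ, c ≠ 0 ∧ d ≠ 0 ∧ v = c • u ∧ w = d • u) ∧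
    (∀ i, u ⬝ᵥ (A i).mulVec u = 0) := by
  have minors : ∀ x, (∀ k, u ⬝ᵥ B' k *ᵥ x = 0) → ∀ j, u 0 * x j = u j * x 0 := by
    intro x hx j
    rcases eq_or_ne j 0 with rfl | hj
    · rfl
    · rw [← sub_eq_zero, ← dotProduct_single_sub_single_mulVec, ← hBi j hj, ← hB'i j hj, hx]
  have hu₀ : u 0 ≠ 0 := by
    intro hu₀
    have solves_S : ∀ x, (∀ k, u ⬝ᵥ B' k *ᵥ x = 0) → ∀ k, u ⬝ᵥ B k *ᵥ x = 0 := by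
      intro x hx k
      rcases eq_or_ne k 0 with rfl | hk
      · rw [hB0, dotProduct_single_one_mulVec, hu₀, zero_mul]
      · rw [← hB'i k hk, hx]
    exact hS ⟨u, v, w, hu, hv, hw, h1, solves_S w h2, solves_S v h3⟩
  obtain ⟨c, hvc⟩ : ∃ c : ℝ, v = c • u := ⟨_, eq_div_smul_of_mul_eq_mul hu₀ (minors v h3)⟩
  obtain ⟨d, hwd⟩ : ∃ d : ℝ, w = d • u := ⟨_, eq_div_smul_of_mul_eq_mul hu₀ (minors w h2)⟩
  have hc : c ≠ 0 := left_ne_zero_of_smul (hvc ▸ hv)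
  have hd : d ≠ 0 := left_ne_zero_of_smul (hwd ▸ hw)
  refine ⟨⟨c, d, hc, hd, hvc, hwd⟩, fun i => ?_⟩
  have hcd := h1 i
  rw [hvc, hwd, mulVec_smul, dotProduct_smul, smul_dotProduct, smul_eq_mul, smul_eq_mul] at hcd
  exact (mul_eq_zero.mp ((mul_eq_zero.mp hcd).resolve_left hd)).resolve_left hc

/-- Claim 2: if `S` has no solution with `u, v, w` all nonzero and
`(u,v,w)` (all nonzero) solves `S′` (where `B_1 = C_1` are replaced by zero),
then `v = c·u` and `w = d·u` for some nonzero reals `c, d`, and consequently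
`uᵀ A_i u = 0` for all `i`. -/
theorem stmt_11 (n : ℕ) [NeZero n] (A : Fin n → Matrix (Fin n) (Fin n) ℝ)
    (B B' : Fin n → Matrix (Fin n) (Fin n) ℝ)
    (hB0 : B 0 = Matrix.single 0 0 1)
    (hBi : ∀ i : Fin n, i ≠ 0 →
      B i = Matrix.single 0 i 1 - Matrix.single i 0 1)
    (hB'0 : B' 0 = 0)
    (hB'i : ∀ i : Fin n, i ≠ 0 → B' i = B i)
    (hS : ¬ ∃ u v w : Fin n → ℝ, u ≠ 0 ∧ v ≠ 0 ∧ w ≠ 0 ∧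
      (∀ i, v ⬝ᵥ (A i).mulVec w = 0) ∧
      (∀ j, u ⬝ᵥ (B j).mulVec w = 0) ∧
      (∀ k, u ⬝ᵥ (B k).mulVec v = 0))
    (u v w : Fin n → ℝ) (hu : u ≠ 0) (hv : v ≠ 0) (hw : w ≠ 0)
    (h1 : ∀ i, v ⬝ᵥ (A i).mulVec w = 0)
    (h2 : ∀ j, u ⬝ᵥ (B' j).mulVec w = 0)
    (h3 : ∀ k, u ⬝ᵥ (B' k).mulVec v = 0) :
    (∃ c d : ℝ, c ≠ 0 ∧ d ≠ 0 ∧ v = c • u ∧ w = d • u) ∧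
    (∀ i, u ⬝ᵥ (A i).mulVec u = 0) :=
  stmt_11_general n A B B' hB0 hBi hB'i hS u v w hu hv hw h1 h2 h3
end
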